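/- Let (X, 𝔄, μ) be a finite measure space, f : X → X measurable and non-singular with respect to μ, and F : A → X an induced map (F(x) = f^{R(x)}(x) for a measurable induced time R). Suppose μ(A_0) > 0, where A_0 = ⋂_{n≥0} F^{-n}(X). If F is orbit-coherent and μ is f-ergodic (every f-invariant measurable set has measure 0 or full measure), then μ restricted to A_0 is F-ergodic. -/

import Mathlib

/-!
Let `V` be `F`-invariant and suppose both `V ∩ A₀` and `Vᶜ ∩ A₀` have positive measure. Each of
them is mapped into itself by `F`, and `F` is a positive iterate of `f`, so every point of either
set returns to it under `f`. Hence the set of points whose forward `f`-orbit meets it is exactly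
`f`-invariant, and by ergodicity of `f` it has full measure. A point in both full-measure sets
has a forward `f`-orbit meeting both `V ∩ A₀` and `Vᶜ ∩ A₀`; orbit coherence turns this into
points of `V` and `Vᶜ` with intersecting `F`-orbits, contradicting the `F`-invariance of `V`.
-/

open MeasureTheory Set Function Filter

section

variable {X : Type*} {f F : X → X} {R : X → ℕ} {A S T : Set X}

theorem Function.preimage_iUnion_preimage_iterate_of_returns
    (hret : ∀ x ∈ S, ∃ k, 0 < k ∧ f^[k] x ∈ S) :
    f ⁻¹' ⋃ n, f^[n] ⁻¹' S = ⋃ n, f^[n] ⁻¹' S := by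
  ext x
  simp only [mem_preimage, mem_iUnion, ← iterate_succ_apply]
  constructor
  · rintro ⟨n, hn⟩
    exact ⟨n + 1, hn⟩
  · rintro ⟨n, hn⟩
    obtain ⟨k, hk, hkS⟩ := hret _ hn
    refine ⟨k - 1 + n, ?_⟩
    rwa [Nat.succ_eq_add_one, ← Nat.add_right_comm, Nat.sub_add_cancel hk, iterate_add_apply]

theorem mapsTo_setOf_forall_iterate_mem :
    MapsTo F {x | ∀ n, F^[n] x ∈ A} {x | ∀ n, F^[n] x ∈ A} :=
  fun _ hx n => iterate_succ_apply F n _ ▸ hx (n + 1)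

theorem exists_iterate_mem_of_mapsTo (hF : ∀ x ∈ S, F x = f^[R x] x) (hR : ∀ x ∈ S, 0 < R x)
    (hS : MapsTo F S S) : ∀ x ∈ S, ∃ k, 0 < k ∧ f^[k] x ∈ S :=
  fun x hx => ⟨R x, hR x hx, hF x hx ▸ hS hx⟩

theorem iterate_ne_of_mapsTo_of_disjoint (hS : MapsTo F S S) (hT : MapsTo F T T)
    (hST : Disjoint S T) {y z : X} (hy : y ∈ S) (hz : z ∈ T) (n m : ℕ) :
    F^[n] y ≠ F^[m] z :=
  hST.ne_of_mem (hS.iterate n hy) (hT.iterate m hz)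

variable [MeasurableSpace X] {μ : Measure X}

theorem preErgodic_of_measure_self_or_compl_eq_zero
    (h : ∀ s : Set X, MeasurableSet s → f ⁻¹' s = s → μ s = 0 ∨ μ sᶜ = 0) :
    PreErgodic f μ :=
  ⟨fun s hs hfs => eventuallyConst_set'.2 <| (h s hs hfs).imp ae_eq_empty.2 ae_eq_univ.2⟩

theorem PreErgodic.ae_exists_iterate_mem_of_returns (hf_erg : PreErgodic f μ)
    (hf : Measurable f) (hS : MeasurableSet S) (hμS : μ S ≠ 0)
    (hret : ∀ x ∈ S, ∃ k, 0 < k ∧ f^[k] x ∈ S) :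
    ∀ᵐ x ∂μ, ∃ n, f^[n] x ∈ S := by
  have hW : MeasurableSet (⋃ n, f^[n] ⁻¹' S) := .iUnion fun n => hf.iterate n hS
  have hS_null_of (hnull : ∀ᵐ x ∂μ, x ∉ ⋃ n, f^[n] ⁻¹' S) : μ S = 0 :=
    measure_mono_null (fun x hx => mem_iUnion.2 ⟨0, hx⟩) (measure_eq_zero_iff_ae_notMem.2 hnull)
  have hW_inv := preimage_iUnion_preimage_iterate_of_returns hret
  exact ((hf_erg.ae_mem_or_ae_notMem hW hW_inv).resolve_right (hμS ∘ hS_null_of)).mono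
    fun _ hx => mem_iUnion.1 hx

theorem PreErgodic.measure_eq_zero_or_of_forall_iterate_ne (hf_erg : PreErgodic f μ)
    (hf : Measurable f) (hS : MeasurableSet S) (hT : MeasurableSet T)
    (hretS : ∀ x ∈ S, ∃ k, 0 < k ∧ f^[k] x ∈ S) (hretT : ∀ x ∈ T, ∃ k, 0 < k ∧ f^[k] x ∈ T)
    (hdisj : ∀ y ∈ S, ∀ z ∈ T, ∀ n m, f^[n] y ≠ f^[m] z) :
    μ S = 0 ∨ μ T = 0 := by
  by_contra! ⟨hμS, hμT⟩
  have : (ae μ).NeBot := ae_neBot.2 <| by rintro rfl; exact hμS rfl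
  obtain ⟨x, ⟨n, hn⟩, ⟨m, hm⟩⟩ :=
    ((hf_erg.ae_exists_iterate_mem_of_returns hf hS hμS hretS).and
      (hf_erg.ae_exists_iterate_mem_of_returns hf hT hμT hretT)).exists
  exact hdisj _ hn _ hm m n <| by rw [← iterate_add_apply, ← iterate_add_apply, Nat.add_comm]

theorem measurable_iterate_apply (hf : Measurable f) (hR : Measurable R) :
    Measurable fun x => f^[R x] x :=
  (measurable_from_prod_countable_left (f := fun p : X × ℕ => f^[p.2] p.1)
    fun n => hf.iterate n).comp (measurable_id.prodMk hR)

theorem measurableSet_setOf_forall_iterate_mem (hF : Measurable F) (hA : MeasurableSet A) :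
    MeasurableSet {x | ∀ n, F^[n] x ∈ A} := by
  rw [ofPred_forall]
  exact .iInter fun n => hF.iterate n hA

theorem preErgodic_restrict_of_orbits_meet {A₀ : Set X} (hf_erg : PreErgodic f μ)
    (hf : Measurable f) (hA₀ : MeasurableSet A₀) (hFA₀ : MapsTo F A₀ A₀)
    (hF : ∀ x ∈ A₀, F x = f^[R x] x) (hR : ∀ x ∈ A₀, 0 < R x)
    (horb : ∀ x ∈ A₀, ∀ y ∈ A₀, (∃ n m, f^[n] x = f^[m] y) → ∃ n m, F^[n] x = F^[m] y) :
    PreErgodic F (μ.restrict A₀) := by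
  refine preErgodic_of_measure_self_or_compl_eq_zero fun V hV hFV => ?_
  have hFVc : F ⁻¹' Vᶜ = Vᶜ := by rw [preimage_compl, hFV]
  have hmaps (U : Set X) (hU : F ⁻¹' U = U) : MapsTo F (U ∩ A₀) (U ∩ A₀) :=
    MapsTo.inter_inter (fun _ hx => hU.ge hx) hFA₀
  have hret (U : Set X) (hU : F ⁻¹' U = U) := exists_iterate_mem_of_mapsTo
    (fun x hx => hF x hx.2) (fun x hx => hR x hx.2) (hmaps U hU)
  rw [Measure.restrict_apply hV, Measure.restrict_apply hV.compl]
  refine hf_erg.measure_eq_zero_or_of_forall_iterate_ne hf (hV.inter hA₀) (hV.compl.inter hA₀)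
    (hret V hFV) (hret Vᶜ hFVc) fun y hy z hz n m hnm => ?_
  obtain ⟨a, b, hab⟩ := horb y hy.2 z hz.2 ⟨n, m, hnm⟩
  exact iterate_ne_of_mapsTo_of_disjoint (hmaps V hFV) (hmaps Vᶜ hFVc)
    (disjoint_compl_right.mono inter_subset_left inter_subset_left) hy hz a b hab

end

theorem orbit_coherent_ergodic_general {X : Type*} [MeasurableSpace X]
    (μ : Measure X) (f : X → X) (hf : Measurable f)
    (hergf : ∀ V : Set X, MeasurableSet V → f ⁻¹' V = V → μ V = 0 ∨ μ Vᶜ = 0)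
    (A : Set X) (hA : MeasurableSet A) (R : X → ℕ) (hR : Measurable R)
    (hR1 : ∀ x ∈ A, 1 ≤ R x)
    (F : X → X) (hF : ∀ x, F x = f^[R x] x)
    (A₀ : Set X) (hA₀ : A₀ = {x | ∀ n : ℕ, F^[n] x ∈ A})
    (horb : ∀ x ∈ A₀, ∀ y ∈ A₀,
      ((∃ n m : ℕ, f^[n] x = f^[m] y) ↔ (∃ n m : ℕ, F^[n] x = F^[m] y))) :
    ∀ V : Set X, MeasurableSet V → F ⁻¹' V = V →
      μ.restrict A₀ V = 0 ∨ μ.restrict A₀ Vᶜ = 0 := by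
  have hFm : Measurable F := funext hF ▸ measurable_iterate_apply hf hR
  subst hA₀
  have hF_erg := preErgodic_restrict_of_orbits_meet (preErgodic_of_measure_self_or_compl_eq_zero
    hergf) hf (measurableSet_setOf_forall_iterate_mem hFm hA) mapsTo_setOf_forall_iterate_mem
    (fun x _ => hF x) (fun x hx => hR1 x (hx 0)) fun x hx y hy => (horb x hx y hy).1
  exact fun V hV hFV => hF_erg.measure_self_or_compl_eq_zero hV hFV

/-- If f is non-singular and μ-ergodic and the induced map F is orbit-coherent with
μ(A₀) > 0, then μ restricted to A₀ is F-ergodic. -/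
theorem orbit_coherent_ergodic {X : Type*} [MeasurableSpace X]
    (μ : Measure X) [IsFiniteMeasure μ] (f : X → X) (hf : Measurable f)
    (hns : μ.map f ≪ μ)
    (hergf : ∀ V : Set X, MeasurableSet V → f ⁻¹' V = V → μ V = 0 ∨ μ Vᶜ = 0)
    (A : Set X) (hA : MeasurableSet A) (R : X → ℕ) (hR : Measurable R)
    (hR1 : ∀ x ∈ A, 1 ≤ R x)
    (F : X → X) (hF : ∀ x, F x = f^[R x] x)
    (A₀ : Set X) (hA₀ : A₀ = {x | ∀ n : ℕ, F^[n] x ∈ A})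
    (hpos : 0 < μ A₀)
    (horb : ∀ x ∈ A₀, ∀ y ∈ A₀,
      ((∃ n m : ℕ, f^[n] x = f^[m] y) ↔ (∃ n m : ℕ, F^[n] x = F^[m] y))) :
    ∀ V : Set X, MeasurableSet V → F ⁻¹' V = V →
      μ.restrict A₀ V = 0 ∨ μ.restrict A₀ Vᶜ = 0 :=
  orbit_coherent_ergodic_general μ f hf hergf A hA R hR hR1 F hF A₀ hA₀ horb
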